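/- Let M and N be models of KP^P with N a blunt rank extension of M. Then M satisfies full Separation (Π∞-Separation): for every formula φ(x, z⃗) of the language of set theory and all parameters from M, and every w ∈ M, there is y ∈ M whose elements are exactly the elements x of w in M satisfying φ(x, z⃗) in M. -/

import Mathlib

universe u

/-- de Bruijn-style formulas of the language of set theory, with primitive
bounded quantifiers (`∈`-bounded and `⊆`-bounded) and unbounded quantifiers.
`SF n` is the type of formulas with (at most) `n` free variables. -/
inductive SF : ℕ → Type
  | mem {n} (i j : Fin n) : SF n
  | eq {n} (i j : Fin n) : SF n
  | not {n} (φ : SF n) : SF n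
  | and {n} (φ ψ : SF n) : SF n
  | or {n} (φ ψ : SF n) : SF n
  | bexMem {n} (i : Fin n) (φ : SF (n + 1)) : SF n
  | ballMem {n} (i : Fin n) (φ : SF (n + 1)) : SF n
  | bexSub {n} (i : Fin n) (φ : SF (n + 1)) : SF n
  | ballSub {n} (i : Fin n) (φ : SF (n + 1)) : SF n
  | ex {n} (φ : SF (n + 1)) : SF n
  | all {n} (φ : SF (n + 1)) : SF n

variable {X : Type u}

/-- `a ⊆ b` in the structure `⟨X, E⟩`. -/
def SubE (E : X → X → Prop) (a b : X) : Prop := ∀ z, E z a → E z b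

/-- Satisfaction of a formula in the structure `⟨X, E⟩` under a valuation. -/
def SF.Eval (E : X → X → Prop) : {n : ℕ} → SF n → (Fin n → X) → Prop
  | _, .mem i j, v => E (v i) (v j)
  | _, .eq i j, v => v i = v j
  | _, .not φ, v => ¬ φ.Eval E v
  | _, .and φ ψ, v => φ.Eval E v ∧ ψ.Eval E v
  | _, .or φ ψ, v => φ.Eval E v ∨ ψ.Eval E v
  | _, .bexMem i φ, v => ∃ x, E x (v i) ∧ φ.Eval E (Fin.snoc v x)
  | _, .ballMem i φ, v => ∀ x, E x (v i) → φ.Eval E (Fin.snoc v x)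
  | _, .bexSub i φ, v => ∃ x, SubE E x (v i) ∧ φ.Eval E (Fin.snoc v x)
  | _, .ballSub i φ, v => ∀ x, SubE E x (v i) → φ.Eval E (Fin.snoc v x)
  | _, .ex φ, v => ∃ x, φ.Eval E (Fin.snoc v x)
  | _, .all φ, v => ∀ x, φ.Eval E (Fin.snoc v x)

/-- `Δ₀` formulas: only `∈`-bounded quantifiers. -/
def SF.IsDelta0 : {n : ℕ} → SF n → Prop
  | _, .mem _ _ => True
  | _, .eq _ _ => True
  | _, .not φ => φ.IsDelta0
  | _, .and φ ψ => φ.IsDelta0 ∧ ψ.IsDelta0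
  | _, .or φ ψ => φ.IsDelta0 ∧ ψ.IsDelta0
  | _, .bexMem _ φ => φ.IsDelta0
  | _, .ballMem _ φ => φ.IsDelta0
  | _, .bexSub _ _ => False
  | _, .ballSub _ _ => False
  | _, .ex _ => False
  | _, .all _ => False

/-- Takahashi's class `Δ₀^𝒫`: only `∈`-bounded and `⊆`-bounded quantifiers. -/
def SF.IsDelta0P : {n : ℕ} → SF n → Prop
  | _, .mem _ _ => True
  | _, .eq _ _ => True
  | _, .not φ => φ.IsDelta0P
  | _, .and φ ψ => φ.IsDelta0P ∧ ψ.IsDelta0P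
  | _, .or φ ψ => φ.IsDelta0P ∧ ψ.IsDelta0P
  | _, .bexMem _ φ => φ.IsDelta0P
  | _, .ballMem _ φ => φ.IsDelta0P
  | _, .bexSub _ φ => φ.IsDelta0P
  | _, .ballSub _ φ => φ.IsDelta0P
  | _, .ex _ => False
  | _, .all _ => False

def Delta0C : ∀ n, SF n → Prop := fun _ φ => φ.IsDelta0
def Delta0PC : ∀ n, SF n → Prop := fun _ φ => φ.IsDelta0P
def Sigma1C : ∀ n, SF n → Prop := fun _ φ => ∃ ψ, ψ.IsDelta0 ∧ φ = SF.ex ψ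
def Pi1C : ∀ n, SF n → Prop := fun _ φ => ∃ ψ, ψ.IsDelta0 ∧ φ = SF.all ψ
def Sigma1PC : ∀ n, SF n → Prop := fun _ φ => ∃ ψ, ψ.IsDelta0P ∧ φ = SF.ex ψ
def Pi1PC : ∀ n, SF n → Prop := fun _ φ => ∃ ψ, ψ.IsDelta0P ∧ φ = SF.all ψ
def FullC : ∀ n, SF n → Prop := fun _ _ => True

/-- A Gödel numbering of formulas. -/
def SF.encode : {n : ℕ} → SF n → ℕ
  | _, .mem i j => Nat.pair 0 (Nat.pair i.val j.val)
  | _, .eq i j => Nat.pair 1 (Nat.pair i.val j.val)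
  | _, .not φ => Nat.pair 2 φ.encode
  | _, .and φ ψ => Nat.pair 3 (Nat.pair φ.encode ψ.encode)
  | _, .or φ ψ => Nat.pair 4 (Nat.pair φ.encode ψ.encode)
  | _, .bexMem i φ => Nat.pair 5 (Nat.pair i.val φ.encode)
  | _, .ballMem i φ => Nat.pair 6 (Nat.pair i.val φ.encode)
  | _, .bexSub i φ => Nat.pair 7 (Nat.pair i.val φ.encode)
  | _, .ballSub i φ => Nat.pair 8 (Nat.pair i.val φ.encode)
  | _, .ex φ => Nat.pair 9 φ.encode
  | _, .all φ => Nat.pair 10 φ.encode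

/-- A theory (set of sentences) is recursively enumerable if the set of Gödel
numbers of its members is the domain of a partial recursive function. -/
def REset (S : Set (SF 0)) : Prop :=
  ∃ f : ℕ →. ℕ, Nat.Partrec f ∧ ∀ φ : SF 0, φ ∈ S ↔ SF.encode φ ∈ f.Dom

/-- `⟨X, E⟩ ⊨ S` for a set `S` of sentences. -/
def SatT (E : X → X → Prop) (S : Set (SF 0)) : Prop :=
  ∀ φ ∈ S, SF.Eval E φ (fun i => i.elim0)

/-! ## Axioms and axiom schemes -/

def ExtensionalityAx (E : X → X → Prop) : Prop := ∀ a b, (∀ z, E z a ↔ E z b) → a = b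
def EmptySetAx (E : X → X → Prop) : Prop := ∃ a, ∀ z, ¬ E z a
def PairAx (E : X → X → Prop) : Prop := ∀ x y, ∃ a, ∀ z, E z a ↔ (z = x ∨ z = y)
def UnionAx (E : X → X → Prop) : Prop := ∀ a, ∃ b, ∀ z, E z b ↔ ∃ y, E y a ∧ E z y
def SetDiffAx (E : X → X → Prop) : Prop := ∀ a b, ∃ c, ∀ z, E z c ↔ (E z a ∧ ¬ E z b)
def PowerAx (E : X → X → Prop) : Prop := ∀ a, ∃ p, ∀ z, E z p ↔ SubE E z a
def TransSet (E : X → X → Prop) (t : X) : Prop := ∀ y, E y t → ∀ z, E z y → E z t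
def TCoAx (E : X → X → Prop) : Prop := ∀ a, ∃ t, TransSet E t ∧ SubE E a t
def SuccOf (E : X → X → Prop) (x s : X) : Prop := ∀ z, E z s ↔ (E z x ∨ z = x)
def InductiveSet (E : X → X → Prop) (a : X) : Prop :=
  (∃ e, E e a ∧ ∀ z, ¬ E z e) ∧ ∀ x, E x a → ∃ s, E s a ∧ SuccOf E x s
def InfinityAx (E : X → X → Prop) : Prop := ∃ a, InductiveSet E a
def SetFoundationAx (E : X → X → Prop) : Prop :=
  ∀ z, (∃ x, E x z) → ∃ y, E y z ∧ ∀ x, E x y → ¬ E x z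
/-- The axiom of choice: every set of pairwise disjoint nonempty sets has a transversal. -/
def ACAx (E : X → X → Prop) : Prop :=
  ∀ a, (∀ x, E x a → ∃ z, E z x) →
    (∀ x y, E x a → E y a → x ≠ y → ∀ z, E z x → ¬ E z y) →
    ∃ c, ∀ x, E x a → ∃! z, E z c ∧ E z x

def SeparationScheme (E : X → X → Prop) (C : ∀ n, SF n → Prop) : Prop :=
  ∀ (n : ℕ) (φ : SF (n + 1)), C _ φ → ∀ (p : Fin n → X) (w : X),
    ∃ y, ∀ x, E x y ↔ (E x w ∧ φ.Eval E (Fin.snoc p x))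

def CollectionScheme (E : X → X → Prop) (C : ∀ n, SF n → Prop) : Prop :=
  ∀ (n : ℕ) (φ : SF (n + 2)), C _ φ → ∀ (p : Fin n → X) (w : X),
    (∀ x, E x w → ∃ y, φ.Eval E (Fin.snoc (Fin.snoc p x) y)) →
    ∃ c, ∀ x, E x w → ∃ y, E y c ∧ φ.Eval E (Fin.snoc (Fin.snoc p x) y)

def FoundationScheme (E : X → X → Prop) (C : ∀ n, SF n → Prop) : Prop :=
  ∀ (n : ℕ) (φ : SF (n + 1)), C _ φ → ∀ p : Fin n → X,
    (∃ x, φ.Eval E (Fin.snoc p x)) →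
    ∃ y, φ.Eval E (Fin.snoc p y) ∧ ∀ x, E x y → ¬ φ.Eval E (Fin.snoc p x)

/-! ## Theories -/

def ModelMminus (E : X → X → Prop) : Prop :=
  ExtensionalityAx E ∧ EmptySetAx E ∧ PairAx E ∧ UnionAx E ∧ SetDiffAx E ∧
    TCoAx E ∧ InfinityAx E ∧ SeparationScheme E Delta0C ∧ SetFoundationAx E

def ModelM (E : X → X → Prop) : Prop := ModelMminus E ∧ PowerAx E

def ModelKP (E : X → X → Prop) : Prop :=
  ExtensionalityAx E ∧ PairAx E ∧ UnionAx E ∧ SeparationScheme E Delta0C ∧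
    CollectionScheme E Delta0C ∧ FoundationScheme E Pi1C

def ModelKPP (E : X → X → Prop) : Prop :=
  ModelM E ∧ CollectionScheme E Delta0PC ∧ FoundationScheme E Pi1PC

def ModelMOST (E : X → X → Prop) : Prop :=
  ModelM E ∧ SeparationScheme E Sigma1C ∧ ACAx E

def ModelZF (E : X → X → Prop) : Prop :=
  ExtensionalityAx E ∧ EmptySetAx E ∧ PairAx E ∧ UnionAx E ∧ PowerAx E ∧
    InfinityAx E ∧ SeparationScheme E FullC ∧ CollectionScheme E FullC ∧
    FoundationScheme E FullC

/-! ## Internal set-theoretic machinery -/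

/-- `p = {{x}, {x, y}}` (Kuratowski pair). -/
def IsPair (E : X → X → Prop) (p x y : X) : Prop :=
  ∀ z, E z p ↔ ((∀ w, E w z ↔ w = x) ∨ (∀ w, E w z ↔ (w = x ∨ w = y)))

def FunApp (E : X → X → Prop) (f x y : X) : Prop := ∃ q, E q f ∧ IsPair E q x y

/-- `f` is a function with domain `d`. -/
def IsFuncOn (E : X → X → Prop) (f d : X) : Prop :=
  (∀ q, E q f → ∃ x y, IsPair E q x y ∧ E x d) ∧
  (∀ x y y', FunApp E f x y → FunApp E f x y' → y = y') ∧
  (∀ x, E x d → ∃ y, FunApp E f x y)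

/-- `f` is an injective function from `dom` into `cod`. -/
def InjFunInto (E : X → X → Prop) (f dom cod : X) : Prop :=
  IsFuncOn E f dom ∧ (∀ x y, FunApp E f x y → E y cod) ∧
  (∀ x x' y, FunApp E f x y → FunApp E f x' y → x = x')

/-- `|t| ≤ |κ|`. -/
def CardLe (E : X → X → Prop) (t κ : X) : Prop := ∃ f, InjFunInto E f t κ

def IsOrdinal (E : X → X → Prop) (x : X) : Prop :=
  TransSet E x ∧ ∀ y, E y x → TransSet E y

/-- An (initial ordinal =) cardinal: an ordinal that does not inject into any of
its members. -/
def IsCardinal (E : X → X → Prop) (κ : X) : Prop :=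
  IsOrdinal E κ ∧ ∀ β, E β κ → ¬ CardLe E κ β

/-- `t` is the transitive closure of the set `x`. -/
def IsTCset (E : X → X → Prop) (t x : X) : Prop :=
  TransSet E t ∧ SubE E x t ∧ ∀ u, TransSet E u → SubE E x u → SubE E t u

/-- `t` is the transitive closure of `{x}`. -/
def IsTCsingleton (E : X → X → Prop) (t x : X) : Prop :=
  TransSet E t ∧ E x t ∧ ∀ u, TransSet E u → E x u → SubE E t u

def IsOmega (E : X → X → Prop) (w : X) : Prop :=
  InductiveSet E w ∧ ∀ a, InductiveSet E a → SubE E w a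

/-- `⟨X, E⟩` is `ω`-standard: its internal natural numbers are order-isomorphic
to the standard natural numbers. -/
def OmegaStandard (E : X → X → Prop) : Prop :=
  ∀ w, IsOmega E w → ∃ f : ℕ → X, (∀ n, E (f n) w) ∧ (∀ x, E x w → ∃ n, x = f n) ∧
    ∀ m n : ℕ, (E (f m) (f n) ↔ m < n)

/-- `f` is (a function coding) the cumulative hierarchy `β ↦ V_β` for `β ∈ α`,
using `V_β = ⋃_{γ∈β} 𝒫(V_γ)`. -/
def IsRK (E : X → X → Prop) (α f : X) : Prop :=
  IsOrdinal E α ∧ IsFuncOn E f α ∧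
  ∀ β vβ, E β α → FunApp E f β vβ →
    ∀ x, E x vβ ↔ ∃ γ, E γ β ∧ ∃ vγ, FunApp E f γ vγ ∧ SubE E x vγ

/-- Internal rank comparison `ρ(x) ≤ ρ(y)`: `x` belongs to every stage of the
cumulative hierarchy that `y` belongs to. -/
def RankLe (E : X → X → Prop) (x y : X) : Prop :=
  ∀ α f β v, IsRK E α f → E β α → FunApp E f β v → E y v → E x v

/-- External `n`-th von Neumann natural number. -/
def IsVN (E : X → X → Prop) : ℕ → X → Prop
  | 0, x => ∀ z, ¬ E z x
  | (n + 1), x => ∃ y, IsVN E n y ∧ SuccOf E y x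

/-- `a` is the `n`-th infinite cardinal `ℵ_n` (for external `n`, as computed in
the model): `ℵ₀ = ω`, and `ℵ_{n+1}` is the least cardinal above `ℵ_n`. -/
def IsAleph (E : X → X → Prop) : ℕ → X → Prop
  | 0, a => IsOmega E a
  | (n + 1), a => ∃ b, IsAleph E n b ∧ IsCardinal E a ∧ E b a ∧
      ∀ c, IsCardinal E c → E b c → (c = a ∨ E a c)

/-- `a` is the cardinal `ℵ_ω` of the model: the least limit cardinal above `ω`. -/
def IsAlephOmega (E : X → X → Prop) (a : X) : Prop :=
  (IsCardinal E a ∧ (∃ w, IsOmega E w ∧ E w a) ∧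
    (∀ β, E β a → ∃ μ, IsCardinal E μ ∧ E β μ ∧ E μ a)) ∧
  ∀ a', (IsCardinal E a' ∧ (∃ w, IsOmega E w ∧ E w a') ∧
    (∀ β, E β a' → ∃ μ, IsCardinal E μ ∧ E β μ ∧ E μ a')) → (a = a' ∨ E a a')

/-! ## Internal satisfaction and the constructible hierarchy (for `V = L`) -/

/-- `c = ⟨n, a⟩` with the tag `n` an external natural (internally coded). -/
def TaggedBy (E : X → X → Prop) (c : X) (n : ℕ) (a : X) : Prop :=
  ∃ t, IsVN E n t ∧ IsPair E c t a

def CodeMem (E : X → X → Prop) (c i j : X) : Prop := ∃ p, IsPair E p i j ∧ TaggedBy E c 0 p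
def CodeEq (E : X → X → Prop) (c i j : X) : Prop := ∃ p, IsPair E p i j ∧ TaggedBy E c 1 p
def CodeNot (E : X → X → Prop) (c' c : X) : Prop := TaggedBy E c' 2 c
def CodeAnd (E : X → X → Prop) (c' c₁ c₂ : X) : Prop := ∃ p, IsPair E p c₁ c₂ ∧ TaggedBy E c' 3 p
def CodeEx (E : X → X → Prop) (c' i c : X) : Prop := ∃ p, IsPair E p i c ∧ TaggedBy E c' 4 p

/-- `d` is closed under the internal formation rules for codes of formulas with
variables indexed by elements of `w` (the internal `ω`). -/
def ClosedCode (E : X → X → Prop) (w d : X) : Prop :=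
  (∀ i j c, E i w → E j w → CodeMem E c i j → E c d) ∧
  (∀ i j c, E i w → E j w → CodeEq E c i j → E c d) ∧
  (∀ c c', E c d → CodeNot E c' c → E c' d) ∧
  (∀ c₁ c₂ c', E c₁ d → E c₂ d → CodeAnd E c' c₁ c₂ → E c' d) ∧
  (∀ i c c', E i w → E c d → CodeEx E c' i c → E c' d)

/-- `c` is an internal code of a first-order formula of the language of set theory. -/
def FormCode (E : X → X → Prop) (w c : X) : Prop := ∀ d, ClosedCode E w d → E c d

/-- An internal assignment of elements of `a` to the variables. -/
def IsAssign (E : X → X → Prop) (w a v : X) : Prop :=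
  IsFuncOn E v w ∧ ∀ i y, FunApp E v i y → E y a

/-- `v' = v[i ↦ x]`. -/
def UpdateAssign (E : X → X → Prop) (w v : X) (i x v' : X) : Prop :=
  FunApp E v' i x ∧ ∀ j, E j w → j ≠ i → ∀ y, (FunApp E v j y ↔ FunApp E v' j y)

def PairIn (E : X → X → Prop) (s c v : X) : Prop := ∃ q, E q s ∧ IsPair E q c v

/-- `s` is a (full) satisfaction class for the set structure `⟨a, E⟩`: a set of
pairs ⟨code, assignment⟩ obeying the Tarski conditions. -/
def SatSet (E : X → X → Prop) (w a s : X) : Prop :=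
  (∀ q, E q s → ∃ c v, IsPair E q c v ∧ FormCode E w c ∧ IsAssign E w a v) ∧
  (∀ i j c v xi xj, E i w → E j w → CodeMem E c i j → IsAssign E w a v →
    FunApp E v i xi → FunApp E v j xj → (PairIn E s c v ↔ E xi xj)) ∧
  (∀ i j c v xi xj, E i w → E j w → CodeEq E c i j → IsAssign E w a v →
    FunApp E v i xi → FunApp E v j xj → (PairIn E s c v ↔ xi = xj)) ∧
  (∀ c c' v, FormCode E w c → CodeNot E c' c → IsAssign E w a v →
    (PairIn E s c' v ↔ ¬ PairIn E s c v)) ∧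
  (∀ c₁ c₂ c' v, FormCode E w c₁ → FormCode E w c₂ → CodeAnd E c' c₁ c₂ →
    IsAssign E w a v → (PairIn E s c' v ↔ (PairIn E s c₁ v ∧ PairIn E s c₂ v))) ∧
  (∀ i c c' v, E i w → FormCode E w c → CodeEx E c' i c → IsAssign E w a v →
    (PairIn E s c' v ↔ ∃ x v', E x a ∧ IsAssign E w a v' ∧ UpdateAssign E w v i x v' ∧
      PairIn E s c v'))

/-- `b` is a subset of `a` definable over `⟨a, E⟩` (with parameters from `a`). -/
def DefSub (E : X → X → Prop) (w a s b : X) : Prop :=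
  SubE E b a ∧ ∃ c, FormCode E w c ∧ ∃ v, IsAssign E w a v ∧ ∃ i, E i w ∧
    ∀ x, E x b ↔ (E x a ∧ ∃ v', IsAssign E w a v' ∧ UpdateAssign E w v i x v' ∧
      PairIn E s c v')

/-- `f` codes the constructible hierarchy `β ↦ L_β` for `β ∈ α`, using
`L_β = ⋃_{γ∈β} Def(L_γ)`. -/
def IsLHier (E : X → X → Prop) (w f α : X) : Prop :=
  IsOrdinal E α ∧ IsFuncOn E f α ∧
  ∀ β vβ, E β α → FunApp E f β vβ →
    ∀ x, E x vβ ↔ ∃ γ, E γ β ∧ ∃ vγ, FunApp E f γ vγ ∧ ∃ s, SatSet E w vγ s ∧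
      DefSub E w vγ s x

/-- The axiom `V = L`: every set belongs to some level of the constructible hierarchy. -/
def VeqL (E : X → X → Prop) : Prop :=
  ∀ w, IsOmega E w → ∀ x, ∃ α f β vβ, IsLHier E w f α ∧ E β α ∧ FunApp E f β vβ ∧ E x vβ

/-! ## Extensions -/

/-- The substructure of `⟨X, E⟩` with underlying set `A`. -/
def restrict (E : X → X → Prop) (A : Set X) : A → A → Prop := fun a b => E a.1 b.1

/-- `B` is an end extension of `A` (both substructures of an ambient `⟨X, E⟩`). -/
def EndExtIn (E : X → X → Prop) (A B : Set X) : Prop :=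
  A ⊆ B ∧ ∀ x y, x ∈ B → y ∈ A → E x y → x ∈ A

/-- `B` is a powerset-preserving end extension of `A` (within an ambient `⟨X, E⟩`);
`x ⊆ y` is computed in `B`. -/
def PowExtIn (E : X → X → Prop) (A B : Set X) : Prop :=
  EndExtIn E A B ∧ ∀ x y, x ∈ B → y ∈ A → (∀ z, z ∈ B → E z x → E z y) → x ∈ A

/-- The whole structure `⟨X, E⟩` is an end extension of its substructure on `A`. -/
def EndExtSet (E : X → X → Prop) (A : Set X) : Prop :=
  ∀ x y, y ∈ A → E x y → x ∈ A

/-- `⟨X, E⟩` is a powerset-preserving end extension of its substructure on `A`. -/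
def PowExtSet (E : X → X → Prop) (A : Set X) : Prop :=
  EndExtSet E A ∧ ∀ x y, y ∈ A → SubE E x y → x ∈ A

/-- `⟨X, E⟩` is a rank extension of its substructure on `A`. -/
def RankExtSet (E : X → X → Prop) (A : Set X) : Prop :=
  PowExtSet E A ∧ ∀ x y, y ∈ A → RankLe E x y → x ∈ A

/-- The extension `⟨X, E⟩` of its substructure on `A` is proper and topless. -/
def ToplessSet (E : X → X → Prop) (A : Set X) : Prop :=
  A ≠ Set.univ ∧ ∀ c, (∀ x, E x c → x ∈ A) → c ∈ A

/-- The extension `⟨X, E⟩` of its substructure on `A` is proper and blunt (not topless). -/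
def BluntSet (E : X → X → Prop) (A : Set X) : Prop :=
  A ≠ Set.univ ∧ ¬ ToplessSet E A

/-! ## Weak dependent choice -/

/-- `δ_ω^φ(b, f, p)`: `f` is a function on `ω` with `f(0) = {b}` tracing the
`φ`-successor relation. -/
def IsWDCWitness (E : X → X → Prop) {n : ℕ} (φ : SF (n + 2)) (p : Fin n → X)
    (w b f : X) : Prop :=
  IsFuncOn E f w ∧
  (∃ z v, (∀ u, ¬ E u z) ∧ E z w ∧ FunApp E f z v ∧ ∀ t, E t v ↔ t = b) ∧
  ∀ m m' vm vm', E m w → SuccOf E m m' → E m' w → FunApp E f m vm → FunApp E f m' vm' →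
    ((∀ x, E x vm → ∃ y, E y vm' ∧ φ.Eval E (Fin.snoc (Fin.snoc p x) y)) ∧
     (∀ y, E y vm' → ∀ x, E x vm → φ.Eval E (Fin.snoc (Fin.snoc p x) y)))

/-- The scheme `Δ₀^𝒫-WDC_ω`. -/
def WDComega (E : X → X → Prop) : Prop :=
  ∀ (n : ℕ) (φ : SF (n + 2)), Delta0PC _ φ → ∀ p : Fin n → X,
    (∀ x, ∃ y, φ.Eval E (Fin.snoc (Fin.snoc p x) y)) →
    ∀ w, IsOmega E w → ∀ b, ∃ f, IsWDCWitness E φ p w b f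

/-! ## Internal well-founded extensional relations (for `H_{≤κ}`) -/

def RRel (E : X → X → Prop) (R a b : X) : Prop := ∃ p, E p R ∧ IsPair E p a b

def RelOn (E : X → X → Prop) (R k : X) : Prop :=
  ∀ p, E p R → ∃ a b, IsPair E p a b ∧ E a k ∧ E b k

/-- `BFEXT(R, k)`: `R ⊆ k × k` is extensional on `k`, has a top element, and every
nonempty subset of `k` has an `R`-minimal element. -/
def BFEXT (E : X → X → Prop) (R k : X) : Prop :=
  RelOn E R k ∧
  (∀ a b, E a k → E b k → (∀ c, E c k → (RRel E R c a ↔ RRel E R c b)) → a = b) ∧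
  (∃ t, E t k ∧ ∀ b, E b k → b ≠ t → RRel E R b t) ∧
  (∀ S, SubE E S k → (∃ z, E z S) → ∃ m, E m S ∧ ∀ y, E y S → ¬ RRel E R y m)

/-- `f` is an isomorphism of `⟨k, R⟩` with `⟨T, ∈⟩`. -/
def IsoOnto (E : X → X → Prop) (R k f T : X) : Prop :=
  IsFuncOn E f k ∧ (∀ x y, FunApp E f x y → E y T) ∧
  (∀ y, E y T → ∃ x, E x k ∧ FunApp E f x y) ∧
  (∀ x x' y, FunApp E f x y → FunApp E f x' y → x = x') ∧
  ∀ a b ya yb, E a k → E b k → FunApp E f a ya → FunApp E f b yb →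
    (RRel E R a b ↔ E ya yb)

/-- The predicate `Xv = H_{≤κ} = {x : |TC(x)| ≤ κ}`. -/
def HleqPred (E : X → X → Prop) (Xv κ : X) : Prop :=
  IsCardinal E κ ∧ ∀ x, E x Xv ↔ ∃ t, IsTCset E t x ∧ CardLe E t κ

/-- The explicit conjunction (i) ∧ (ii) ∧ (iii) asserting `Xv = H_{≤κ}`. -/
def ExplicitH (E : X → X → Prop) (Xv κ : X) : Prop :=
  IsCardinal E κ ∧
  (∀ R, BFEXT E R κ → ∃ x f T, E x Xv ∧ E f Xv ∧ E T Xv ∧ IsTCsingleton E T x ∧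
    IsoOnto E R κ f T) ∧
  (∀ x, E x Xv → ∃ T f, E T Xv ∧ E f Xv ∧ IsTCsingleton E T x ∧ InjFunInto E f T κ)

/-!
Bluntness gives `c ∉ M` all of whose elements lie in `M`. As `N` is a rank extension of `M`,
`x ∈ M` iff `ρ(x) < ρ(c)` iff `ρ(x) ≤ ρ(z)` for some `z ∈ c`, so `M` is the union over `z ∈ c`
of the stages `V_β` of `N` containing `z` but not `c`. Δ₀^𝒫-Collection in `N` gathers codes of
such stages into one set, and Δ₀-Separation forms the union of the coded stages once the subset
quantifier in the definition of `V_β` is bounded by a power set; so `M = v*` for some `v ∈ N`.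
Full Separation in `M` is then Δ₀-Separation in `N` for formulas relativized to `v`, the
separated set lying in `M` because the extension is powerset-preserving.

Stages coming from different initial segments of the cumulative hierarchy are compared using
that such segments agree and that ordinals are linearly ordered, both by Π₁^𝒫-Foundation in `N`.
-/

def SF.ren : {n k : ℕ} → (Fin n → Fin k) → SF n → SF k
  | _, _, ρ, .mem i j => .mem (ρ i) (ρ j)
  | _, _, ρ, .eq i j => .eq (ρ i) (ρ j)
  | _, _, ρ, .not φ => .not (φ.ren ρ)
  | _, _, ρ, .and φ ψ => .and (φ.ren ρ) (ψ.ren ρ)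
  | _, _, ρ, .or φ ψ => .or (φ.ren ρ) (ψ.ren ρ)
  | _, _, ρ, .bexMem i φ => .bexMem (ρ i) (φ.ren (Fin.snoc (Fin.castSucc ∘ ρ) (Fin.last _)))
  | _, _, ρ, .ballMem i φ => .ballMem (ρ i) (φ.ren (Fin.snoc (Fin.castSucc ∘ ρ) (Fin.last _)))
  | _, _, ρ, .bexSub i φ => .bexSub (ρ i) (φ.ren (Fin.snoc (Fin.castSucc ∘ ρ) (Fin.last _)))
  | _, _, ρ, .ballSub i φ => .ballSub (ρ i) (φ.ren (Fin.snoc (Fin.castSucc ∘ ρ) (Fin.last _)))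
  | _, _, ρ, .ex φ => .ex (φ.ren (Fin.snoc (Fin.castSucc ∘ ρ) (Fin.last _)))
  | _, _, ρ, .all φ => .all (φ.ren (Fin.snoc (Fin.castSucc ∘ ρ) (Fin.last _)))

theorem Fin.snoc_comp_snoc_castSucc_comp {n k : ℕ} (ρ : Fin n → Fin k) (w : Fin k → X) (x : X) :
    Fin.snoc w x ∘ Fin.snoc (Fin.castSucc ∘ ρ) (Fin.last k) = Fin.snoc (w ∘ ρ) x := by
  funext i
  refine Fin.lastCases ?_ (fun j => ?_) i <;> simp

theorem SF.eval_ren (E : X → X → Prop) {n : ℕ} (φ : SF n) :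
    ∀ {k : ℕ} (ρ : Fin n → Fin k) (w : Fin k → X), (φ.ren ρ).Eval E w ↔ φ.Eval E (w ∘ ρ) := by
  induction φ with
  | mem | eq => intros; rfl
  | not _ ih => intros; simp only [SF.ren, SF.Eval, ih]
  | and _ _ ih ih' | or _ _ ih ih' => intros; simp only [SF.ren, SF.Eval, ih, ih']
  | bexMem _ _ ih | ballMem _ _ ih | bexSub _ _ ih | ballSub _ _ ih | ex _ ih | all _ ih =>
    intros; simp only [SF.ren, SF.Eval, ih, Fin.snoc_comp_snoc_castSucc_comp, Function.comp_apply]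

theorem SF.IsDelta0.ren {n : ℕ} {φ : SF n} (h : φ.IsDelta0) :
    ∀ {k : ℕ} (ρ : Fin n → Fin k), (φ.ren ρ).IsDelta0 := by
  induction φ with
  | mem | eq => intros; trivial
  | not _ ih => exact fun ρ => ih h ρ
  | and _ _ ih ih' | or _ _ ih ih' => exact fun ρ => ⟨ih h.1 _, ih' h.2 _⟩
  | bexMem _ _ ih | ballMem _ _ ih => exact fun ρ => ih h _
  | bexSub | ballSub | ex | all => exact h.elim

theorem SF.IsDelta0P.ren {n : ℕ} {φ : SF n} (h : φ.IsDelta0P) :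
    ∀ {k : ℕ} (ρ : Fin n → Fin k), (φ.ren ρ).IsDelta0P := by
  induction φ with
  | mem | eq => intros; trivial
  | not _ ih => exact fun ρ => ih h ρ
  | and _ _ ih ih' | or _ _ ih ih' => exact fun ρ => ⟨ih h.1 _, ih' h.2 _⟩
  | bexMem _ _ ih | ballMem _ _ ih | bexSub _ _ ih | ballSub _ _ ih => exact fun ρ => ih h _
  | ex | all => exact h.elim

section Pairs

variable {E : X → X → Prop}

theorem IsPair.exists_mem_mem (hpair : PairAx E) {q a b : X} (h : IsPair E q a b) :
    ∃ s, E s q ∧ E a s ∧ E b s :=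
  let ⟨s, hs⟩ := hpair a b
  ⟨s, (h s).2 (.inr hs), (hs a).2 (.inl rfl), (hs b).2 (.inr rfl)⟩

theorem isPair_iff (hext : ExtensionalityAx E) (hpair : PairAx E) (q a b : X) :
    IsPair E q a b ↔
      (∀ z, E z q → (∀ t, E t z ↔ t = a) ∨ ∀ t, E t z ↔ t = a ∨ t = b) ∧
      (∃ z, E z q ∧ ∀ t, E t z ↔ t = a) ∧ ∃ z, E z q ∧ ∀ t, E t z ↔ t = a ∨ t = b := by
  refine ⟨fun h => ⟨fun z => (h z).1, ?_, ?_⟩, ?_⟩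
  · obtain ⟨s, hs⟩ := hpair a a
    simp only [or_self] at hs
    exact ⟨s, (h s).2 (.inl hs), hs⟩
  · obtain ⟨s, hs⟩ := hpair a b
    exact ⟨s, (h s).2 (.inr hs), hs⟩
  · rintro ⟨h, ⟨s, hsq, hs⟩, ⟨s', hs'q, hs'⟩⟩ z
    refine ⟨h z, fun hz => hz.elim (fun hz => ?_) (fun hz => ?_)⟩
    · exact hext z s (fun t => (hz t).trans (hs t).symm) ▸ hsq
    · exact hext z s' (fun t => (hz t).trans (hs' t).symm) ▸ hs'q

end Pairs

def Comparable (E : X → X → Prop) (x y : X) : Prop := E x y ∨ x = y ∨ E y x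

def Definable (C : ∀ n, SF n → Prop) (E : X → X → Prop) {n : ℕ} (P : (Fin n → X) → Prop) :
    Prop :=
  ∃ φ : SF n, C n φ ∧ ∀ v, φ.Eval E v ↔ P v

class Delta0Closed (C : ∀ n, SF n → Prop) : Prop where
  mem {n} (i j : Fin n) : C n (.mem i j)
  eq {n} (i j : Fin n) : C n (.eq i j)
  not {n} {φ : SF n} : C n φ → C n φ.not
  and {n} {φ ψ : SF n} : C n φ → C n ψ → C n (φ.and ψ)
  or {n} {φ ψ : SF n} : C n φ → C n ψ → C n (φ.or ψ)
  bexMem {n} (i : Fin n) {φ : SF (n + 1)} : C (n + 1) φ → C n (.bexMem i φ)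
  ballMem {n} (i : Fin n) {φ : SF (n + 1)} : C (n + 1) φ → C n (.ballMem i φ)
  ren {n k} (ρ : Fin n → Fin k) {φ : SF n} : C n φ → C k (φ.ren ρ)

instance : Delta0Closed Delta0C :=
  ⟨fun _ _ => trivial, fun _ _ => trivial, id, And.intro, And.intro, fun _ => id, fun _ => id,
    fun ρ _ h => SF.IsDelta0.ren h ρ⟩

instance : Delta0Closed Delta0PC :=
  ⟨fun _ _ => trivial, fun _ _ => trivial, id, And.intro, And.intro, fun _ => id, fun _ => id,
    fun ρ _ h => SF.IsDelta0P.ren h ρ⟩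

namespace Definable

variable {C : ∀ n, SF n → Prop} {E : X → X → Prop} {n : ℕ}

theorem of_iff {P Q : (Fin n → X) → Prop} (h : Definable C E P) (hPQ : ∀ v, P v ↔ Q v) :
    Definable C E Q :=
  let ⟨φ, hφ, hφP⟩ := h
  ⟨φ, hφ, fun v => (hφP v).trans (hPQ v)⟩

variable [Delta0Closed C]

theorem mem (i j : Fin n) : Definable C E fun v => E (v i) (v j) :=
  ⟨_, Delta0Closed.mem i j, fun _ => Iff.rfl⟩

theorem eq (i j : Fin n) : Definable C E fun v => v i = v j :=
  ⟨_, Delta0Closed.eq i j, fun _ => Iff.rfl⟩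

theorem not {P : (Fin n → X) → Prop} (h : Definable C E P) : Definable C E fun v => ¬ P v :=
  let ⟨_, hφ, hφP⟩ := h
  ⟨_, Delta0Closed.not hφ, fun v => not_congr (hφP v)⟩

theorem and {P Q : (Fin n → X) → Prop} (hP : Definable C E P) (hQ : Definable C E Q) :
    Definable C E fun v => P v ∧ Q v :=
  let ⟨_, hφ, hφP⟩ := hP
  let ⟨_, hψ, hψQ⟩ := hQ
  ⟨_, Delta0Closed.and hφ hψ, fun v => and_congr (hφP v) (hψQ v)⟩

theorem or {P Q : (Fin n → X) → Prop} (hP : Definable C E P) (hQ : Definable C E Q) :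
    Definable C E fun v => P v ∨ Q v :=
  let ⟨_, hφ, hφP⟩ := hP
  let ⟨_, hψ, hψQ⟩ := hQ
  ⟨_, Delta0Closed.or hφ hψ, fun v => or_congr (hφP v) (hψQ v)⟩

theorem imp {P Q : (Fin n → X) → Prop} (hP : Definable C E P) (hQ : Definable C E Q) :
    Definable C E fun v => P v → Q v :=
  (hP.not.or hQ).of_iff fun _ => imp_iff_not_or.symm

theorem comp {k : ℕ} {P : (Fin k → X) → Prop} (h : Definable C E P) (ρ : Fin k → Fin n) :
    Definable C E fun v => P (v ∘ ρ) :=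
  let ⟨φ, hφ, hφP⟩ := h
  ⟨_, Delta0Closed.ren ρ hφ, fun v => (φ.eval_ren E ρ v).trans (hφP _)⟩

-- The body of a quantifier is given as `fun w => P (Fin.init w) (w (Fin.last n))`, so that `P` is
-- found by higher-order pattern unification; in it, `Fin.init w i` unfolds to `w i.castSucc`.
theorem exists_mem (i : Fin n) {P : (Fin n → X) → X → Prop}
    (h : Definable C E fun w : Fin (n + 1) → X => P (Fin.init w) (w (Fin.last n))) :
    Definable C E fun v => ∃ x, E x (v i) ∧ P v x :=
  let ⟨_, hφ, hφP⟩ := h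
  ⟨_, Delta0Closed.bexMem i hφ, fun v => exists_congr fun x => and_congr Iff.rfl <| by
    simpa only [Fin.init_snoc, Fin.snoc_last] using hφP (Fin.snoc v x)⟩

theorem forall_mem (i : Fin n) {P : (Fin n → X) → X → Prop}
    (h : Definable C E fun w : Fin (n + 1) → X => P (Fin.init w) (w (Fin.last n))) :
    Definable C E fun v => ∀ x, E x (v i) → P v x :=
  let ⟨_, hφ, hφP⟩ := h
  ⟨_, Delta0Closed.ballMem i hφ, fun v => forall_congr' fun x => imp_congr Iff.rfl <| by
    simpa only [Fin.init_snoc, Fin.snoc_last] using hφP (Fin.snoc v x)⟩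

theorem forall_subE (i : Fin n) {P : (Fin n → X) → X → Prop}
    (h : Definable Delta0PC E fun w : Fin (n + 1) → X => P (Fin.init w) (w (Fin.last n))) :
    Definable Delta0PC E fun v => ∀ x, SubE E x (v i) → P v x :=
  let ⟨φ, hφ, hφP⟩ := h
  ⟨.ballSub i φ, hφ, fun v => forall_congr' fun x => imp_congr Iff.rfl <| by
    simpa only [Fin.init_snoc, Fin.snoc_last] using hφP (Fin.snoc v x)⟩

theorem lift {m : ℕ} (σ : Fin n → Fin m) {P : (Fin n → X) → X → Prop}
    (h : Definable C E fun w : Fin (n + 1) → X => P (Fin.init w) (w (Fin.last n))) :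
    Definable C E fun w : Fin (m + 1) → X => P (Fin.init w ∘ σ) (w (Fin.last m)) :=
  (h.comp (Fin.snoc (Fin.castSucc ∘ σ) (Fin.last m))).of_iff fun w => by
    rw [← Fin.snoc_init_self w, Fin.snoc_comp_snoc_castSucc_comp]
    simp only [Fin.init_snoc, Fin.snoc_last]

theorem lift₂ {P : (Fin n → X) → X → X → Prop}
    (h : Definable C E fun w : Fin (n + 2) → X =>
      P (Fin.init (Fin.init w)) (Fin.init w (Fin.last n)) (w (Fin.last (n + 1)))) :
    Definable C E fun w : Fin (n + 3) → X =>
      P (Fin.init (Fin.init (Fin.init w))) (Fin.init w (Fin.last (n + 1))) (w (Fin.last (n + 2))) :=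
  (lift (P := fun v b => P (Fin.init v) (v (Fin.last n)) b)
    (Fin.snoc (Fin.castSucc ∘ Fin.castSucc) (Fin.last (n + 1))) h).of_iff fun w => by
    have hinit : Fin.init (Fin.init w ∘ Fin.snoc (Fin.castSucc ∘ Fin.castSucc) (Fin.last _)) =
        Fin.init (Fin.init (Fin.init w)) := funext fun i => by simp [Fin.init]
    simp only [hinit, Function.comp_apply, Fin.snoc_last]

theorem true : Definable C E fun _ : Fin (n + 1) → X => True :=
  (eq (Fin.last n) (Fin.last n)).of_iff fun _ => iff_of_true rfl trivial

theorem subE (i j : Fin n) : Definable C E fun v => SubE E (v i) (v j) :=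
  forall_mem i (mem _ _)

theorem singleton (z a : Fin n) : Definable C E fun v => ∀ t, E t (v z) ↔ t = v a :=
  ((forall_mem z (eq (Fin.last n) a.castSucc)).and (mem a z)).of_iff fun _ =>
    ⟨fun ⟨h, ha⟩ t => ⟨h t, fun e => e ▸ ha⟩, fun h => ⟨fun t => (h t).1, (h _).2 rfl⟩⟩

theorem upair (z a b : Fin n) :
    Definable C E fun v => ∀ t, E t (v z) ↔ t = v a ∨ t = v b :=
  ((forall_mem z ((eq (Fin.last n) a.castSucc).or (eq (Fin.last n) b.castSucc))).and
    ((mem a z).and (mem b z))).of_iff fun _ =>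
    ⟨fun ⟨h, ha, hb⟩ t => ⟨h t, fun e => e.elim (· ▸ ha) (· ▸ hb)⟩,
      fun h => ⟨fun t => (h t).1, (h _).2 (.inl rfl), (h _).2 (.inr rfl)⟩⟩

theorem isPair (hext : ExtensionalityAx E) (hpair : PairAx E) (q a b : Fin n) :
    Definable C E fun v => IsPair E (v q) (v a) (v b) :=
  ((forall_mem q ((singleton _ _).or (upair _ _ _))).and
    ((exists_mem q (singleton _ _)).and (exists_mem q (upair _ _ _)))).of_iff fun _ =>
    (isPair_iff hext hpair _ _ _).symm

theorem exists_funApp (hext : ExtensionalityAx E) (hpair : PairAx E) (f a : Fin n)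
    {P : (Fin n → X) → X → Prop}
    (h : Definable C E fun w : Fin (n + 1) → X => P (Fin.init w) (w (Fin.last n))) :
    Definable C E fun v => ∃ u, FunApp E (v f) (v a) u ∧ P v u :=
  Definable.of_iff (P := fun v => ∃ q, E q (v f) ∧ ∃ s, E s q ∧ ∃ u, E u s ∧
      IsPair E q (v a) u ∧ P v u)
    (exists_mem f <| exists_mem _ <| exists_mem _ <|
      (isPair hext hpair _ _ _).and (h.lift (Fin.castSucc ∘ Fin.castSucc))) fun _ =>
    ⟨fun ⟨_, hq, _, _, u, _, hqu, hu⟩ => ⟨u, ⟨_, hq, hqu⟩, hu⟩,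
      fun ⟨u, ⟨q, hq, hqu⟩, hu⟩ =>
        let ⟨s, hs, _, hus⟩ := hqu.exists_mem_mem hpair
        ⟨q, hq, s, hs, u, hus, hqu, hu⟩⟩

theorem forall_funApp (hext : ExtensionalityAx E) (hpair : PairAx E) (f a : Fin n)
    {P : (Fin n → X) → X → Prop}
    (h : Definable C E fun w : Fin (n + 1) → X => P (Fin.init w) (w (Fin.last n))) :
    Definable C E fun v => ∀ u, FunApp E (v f) (v a) u → P v u :=
  Definable.of_iff (P := fun v => ∀ q, E q (v f) → ∀ s, E s q → ∀ u, E u s →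
      IsPair E q (v a) u → P v u)
    (forall_mem f <| forall_mem _ <| forall_mem _ <|
      (isPair hext hpair _ _ _).imp (h.lift (Fin.castSucc ∘ Fin.castSucc))) fun _ =>
    ⟨fun h u ⟨q, hq, hqu⟩ =>
        let ⟨s, hs, _, hus⟩ := hqu.exists_mem_mem hpair
        h q hq s hs u hus hqu,
      fun h _ hq _ _ u _ hqu => h u ⟨_, hq, hqu⟩⟩

theorem exists_pair (hext : ExtensionalityAx E) (hpair : PairAx E) (q : Fin n)
    {P : (Fin n → X) → X → X → Prop}
    (h : Definable C E fun w : Fin (n + 2) → X =>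
      P (Fin.init (Fin.init w)) (Fin.init w (Fin.last n)) (w (Fin.last (n + 1)))) :
    Definable C E fun v => ∃ a b, IsPair E (v q) a b ∧ P v a b :=
  Definable.of_iff (P := fun v => ∃ s, E s (v q) ∧ ∃ a, E a s ∧ ∃ b, E b s ∧
      IsPair E (v q) a b ∧ P v a b)
    (exists_mem q <| exists_mem _ <| exists_mem _ <| (isPair hext hpair _ _ _).and h.lift₂)
    fun _ =>
    ⟨fun ⟨_, _, a, _, b, _, hq, hP⟩ => ⟨a, b, hq, hP⟩,
      fun ⟨a, b, hq, hP⟩ =>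
        let ⟨s, hs, has, hbs⟩ := hq.exists_mem_mem hpair
        ⟨s, hs, a, has, b, hbs, hq, hP⟩⟩

theorem forall_pair (hext : ExtensionalityAx E) (hpair : PairAx E) (q : Fin n)
    {P : (Fin n → X) → X → X → Prop}
    (h : Definable C E fun w : Fin (n + 2) → X =>
      P (Fin.init (Fin.init w)) (Fin.init w (Fin.last n)) (w (Fin.last (n + 1)))) :
    Definable C E fun v => ∀ a b, IsPair E (v q) a b → P v a b :=
  Definable.of_iff (P := fun v => ∀ s, E s (v q) → ∀ a, E a s → ∀ b, E b s →
      IsPair E (v q) a b → P v a b)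
    (forall_mem q <| forall_mem _ <| forall_mem _ <| (isPair hext hpair _ _ _).imp h.lift₂)
    fun _ =>
    ⟨fun h a b hq =>
        let ⟨s, hs, has, hbs⟩ := hq.exists_mem_mem hpair
        h s hs a has b hbs hq,
      fun h _ _ a _ b _ hq => h a b hq⟩

theorem transSet (t : Fin n) : Definable C E fun v => TransSet E (v t) :=
  forall_mem t (forall_mem _ (mem _ _))

theorem isOrdinal (a : Fin n) : Definable C E fun v => IsOrdinal E (v a) :=
  (transSet a).and (forall_mem a (transSet _))

theorem isFuncOn (hext : ExtensionalityAx E) (hpair : PairAx E) (f d : Fin n) :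
    Definable C E fun v => IsFuncOn E (v f) (v d) :=
  (forall_mem f (exists_pair hext hpair _ (mem _ _))).and <| Definable.of_iff
    (P := fun v => (∀ q, E q (v f) → ∀ x y, IsPair E q x y → ∀ y', FunApp E (v f) x y' → y' = y) ∧
      ∀ x, E x (v d) → ∃ y, FunApp E (v f) x y ∧ True)
    ((forall_mem f (forall_pair hext hpair _ (forall_funApp hext hpair _ _ (eq _ _)))).and
      (forall_mem d (exists_funApp hext hpair _ _ true))) fun _ =>
    and_congr
      ⟨fun h x y y' ⟨q, hq, hqy⟩ hy' => (h q hq x y hqy y' hy').symm,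
        fun h _ hq x y hqy y' hy' => (h x y y' ⟨_, hq, hqy⟩ hy').symm⟩
      (forall₂_congr fun _ _ => exists_congr fun _ => Iff.of_eq (and_true _))

theorem comparable (i j : Fin n) : Definable C E fun v => Comparable E (v i) (v j) :=
  (mem i j).or ((eq i j).or (mem j i))

end Definable

section Schemes

variable {C : ∀ n, SF n → Prop} {E : X → X → Prop} {n : ℕ}

theorem SeparationScheme.exists_of_definable (hsep : SeparationScheme E C)
    {P : (Fin n → X) → X → Prop}
    (hP : Definable C E fun w : Fin (n + 1) → X => P (Fin.init w) (w (Fin.last n)))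
    (p : Fin n → X) (w : X) : ∃ y, ∀ x, E x y ↔ E x w ∧ P p x :=
  let ⟨φ, hφ, hφP⟩ := hP
  let ⟨y, hy⟩ := hsep n φ hφ p w
  ⟨y, fun x => by simpa only [hφP, Fin.init_snoc, Fin.snoc_last] using hy x⟩

theorem CollectionScheme.exists_of_definable (hcoll : CollectionScheme E C)
    {P : (Fin n → X) → X → X → Prop}
    (hP : Definable C E fun w : Fin (n + 2) → X =>
      P (Fin.init (Fin.init w)) (Fin.init w (Fin.last n)) (w (Fin.last (n + 1))))
    (p : Fin n → X) (w : X) (h : ∀ x, E x w → ∃ y, P p x y) :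
    ∃ c, ∀ x, E x w → ∃ y, E y c ∧ P p x y := by
  obtain ⟨φ, hφ, hφP⟩ := hP
  have hφ' : ∀ x y, φ.Eval E (Fin.snoc (Fin.snoc p x) y) ↔ P p x y := fun x y => by
    simpa only [Fin.init_snoc, Fin.snoc_last] using hφP (Fin.snoc (Fin.snoc p x) y)
  simp only [← hφ'] at h ⊢
  exact hcoll n φ hφ p w h

theorem FoundationScheme.exists_minimal (hfnd : FoundationScheme E Pi1PC)
    {P : (Fin n → X) → X → Prop}
    (hP : Definable Delta0PC E fun w : Fin (n + 1) → X => P (Fin.init w) (w (Fin.last n)))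
    (p : Fin n → X) (h : ∃ x, P p x) : ∃ y, P p y ∧ ∀ x, E x y → ¬ P p x := by
  -- a vacuous universal quantifier makes the defining formula `Π₁^𝒫`
  obtain ⟨φ, hφ, hφP⟩ := hP.comp Fin.castSucc
  have hall : ∀ x, (SF.all φ).Eval E (Fin.snoc p x) ↔ P p x := fun x =>
    ⟨fun hx => by simpa [hφP] using hx x, fun hx d => by simpa [hφP] using hx⟩
  simp only [← hall] at h ⊢
  exact hfnd n _ ⟨φ, hφ, rfl⟩ p h

end Schemes

section Ordinals

variable {E : X → X → Prop} {a b : X}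

theorem IsOrdinal.of_mem (ha : IsOrdinal E a) (hb : E b a) : IsOrdinal E b :=
  ⟨ha.2 b hb, fun c hc => ha.2 c (ha.1 b hb c hc)⟩

/-- Take `a' ≤ a` minimal incomparable with some `y ≤ b`, then `b' ≤ b` minimal incomparable
with `a'`; by minimality `a'` and `b'` have the same elements. -/
theorem IsOrdinal.comparable (hext : ExtensionalityAx E) (hfnd : FoundationScheme E Pi1PC)
    (ha : IsOrdinal E a) (hb : IsOrdinal E b) : Comparable E a b := by
  by_contra hab
  obtain ⟨a', ⟨(ha'a : E a' a ∨ a' = a), ha'⟩, ha'min⟩ := hfnd.exists_minimal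
    (P := fun p x => (E x (p 0) ∨ x = p 0) ∧
      ((∃ y, E y (p 1) ∧ ¬ Comparable E x y) ∨ ¬ Comparable E x (p 1)))
    (((Definable.mem _ _).or (.eq _ _)).and
      ((Definable.exists_mem _ (Definable.comparable _ _).not).or (Definable.comparable _ _).not))
    ![a, b] ⟨a, .inr rfl, .inr hab⟩
  obtain ⟨y₀, hy₀b, hy₀⟩ : ∃ y, (E y b ∨ y = b) ∧ ¬ Comparable E a' y :=
    ha'.elim (fun ⟨y, hy, h⟩ => ⟨y, .inl hy, h⟩) fun h => ⟨b, .inr rfl, h⟩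
  obtain ⟨b', ⟨(hb'b : E b' b ∨ b' = b), hb'⟩, hb'min⟩ := hfnd.exists_minimal
    (P := fun p y => (E y (p 1) ∨ y = p 1) ∧ ¬ Comparable E (p 0) y)
    (((Definable.mem _ _).or (.eq _ _)).and (Definable.comparable _ _).not)
    ![a', b] ⟨y₀, hy₀b, hy₀⟩
  have ha'o : IsOrdinal E a' := ha'a.elim ha.of_mem (· ▸ ha)
  have hb'o : IsOrdinal E b' := hb'b.elim hb.of_mem (· ▸ hb)
  refine hb' (.inr (.inl (hext _ _ fun z => ⟨fun hz => ?_, fun hz => ?_⟩)))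
  · have hza : E z a := ha'a.elim (fun h => ha.1 _ h z hz) (· ▸ hz)
    have hzb' : Comparable E z b' := by
      by_contra h
      exact ha'min z hz ⟨.inl hza, hb'b.elim (fun hb => .inl ⟨b', hb, h⟩) fun e => .inr (e ▸ h)⟩
    rcases hzb' with h | rfl | h
    · exact h
    · exact absurd (.inr (.inr hz)) hb'
    · exact absurd (.inr (.inr (ha'o.1 z hz b' h))) hb'
  · have hzb : E z b := hb'b.elim (fun h => hb.1 _ h z hz) (· ▸ hz)
    have ha'z : Comparable E a' z := by
      by_contra h
      exact hb'min z hz ⟨.inl hzb, h⟩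
    rcases ha'z with h | rfl | h
    · exact absurd (.inl (hb'o.1 z hz a' h)) hb'
    · exact absurd (.inl hz) hb'
    · exact h

end Ordinals

section Hierarchies

variable {E : X → X → Prop}

theorem isRK_iff {α f : X} :
    IsRK E α f ↔ IsOrdinal E α ∧ IsFuncOn E f α ∧ ∀ β, E β α → ∀ u, FunApp E f β u →
      (∀ x, E x u → ∃ γ, E γ β ∧ ∃ v, FunApp E f γ v ∧ SubE E x v) ∧
      ∀ γ, E γ β → ∀ v, FunApp E f γ v → ∀ x, SubE E x v → E x u :=
  and_congr_right' <| and_congr_right' <|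
    ⟨fun h β hβ u hu => ⟨fun x => (h β u hβ hu x).1,
        fun γ hγ v hv x hx => (h β u hβ hu x).2 ⟨γ, hγ, v, hv, hx⟩⟩,
      fun h β u hβ hu x =>
        ⟨(h β hβ u hu).1 x, fun ⟨γ, hγ, v, hv, hx⟩ => (h β hβ u hu).2 γ hγ v hv x hx⟩⟩

/-- `IsRK E α f` with the subsets in the recursion restricted to elements of `D`, which makes it
`Δ₀`. -/
def IsRKWithin (E : X → X → Prop) (D α f : X) : Prop :=
  IsOrdinal E α ∧ IsFuncOn E f α ∧ ∀ β, E β α → ∀ u, FunApp E f β u →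
    (∀ x, E x u → ∃ γ, E γ β ∧ ∃ v, FunApp E f γ v ∧ SubE E x v) ∧
    ∀ γ, E γ β → ∀ v, FunApp E f γ v → ∀ x, E x D → SubE E x v → E x u

theorem FunApp.mem_of_transSet (hpair : PairAx E) {t f a b : X} (ht : TransSet E t)
    (hf : E f t) (h : FunApp E f a b) : E b t :=
  let ⟨q, hq, hqab⟩ := h
  let ⟨s, hs, _, hbs⟩ := hqab.exists_mem_mem hpair
  ht s (ht q (ht f hf q hq) s hs) b hbs

theorem isRK_iff_isRKWithin (hpair : PairAx E) {t D α f : X} (ht : TransSet E t)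
    (hD : ∀ x, E x D ↔ SubE E x t) (hf : E f t) : IsRK E α f ↔ IsRKWithin E D α f := by
  refine isRK_iff.trans (and_congr_right' (and_congr_right' (forall₂_congr fun β _ =>
    forall₂_congr fun u _ => and_congr_right' (forall₂_congr fun γ _ =>
      forall₂_congr fun v hv => ⟨fun h x _ => h x, fun h x hx => h x ?_ hx⟩))))
  exact (hD x).2 fun y hy => ht v (hv.mem_of_transSet hpair ht hf) y (hx y hy)

theorem Definable.isRK {n : ℕ} (hext : ExtensionalityAx E) (hpair : PairAx E) (a f : Fin n) :
    Definable Delta0PC E fun v => IsRK E (v a) (v f) :=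
  Definable.of_iff (((isOrdinal a).and ((isFuncOn hext hpair f a).and
    (forall_mem a (forall_funApp hext hpair _ _
      ((forall_mem _ (exists_mem _ (exists_funApp hext hpair _ _ (subE _ _)))).and
        (forall_mem _ (forall_funApp hext hpair _ _ (forall_subE _ (mem _ _)))))))))) fun _ =>
    isRK_iff.symm

theorem Definable.isRKWithin {C : ∀ n, SF n → Prop} [Delta0Closed C] {n : ℕ}
    (hext : ExtensionalityAx E) (hpair : PairAx E) (D a f : Fin n) :
    Definable C E fun v => IsRKWithin E (v D) (v a) (v f) :=
  (isOrdinal a).and ((isFuncOn hext hpair f a).and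
    (forall_mem a (forall_funApp hext hpair _ _
      ((forall_mem _ (exists_mem _ (exists_funApp hext hpair _ _ (subE _ _)))).and
        (forall_mem _ (forall_funApp hext hpair _ _ (forall_mem _ ((subE _ _).imp (mem _ _)))))))))

theorem IsRK.mem_iff {α f β u x : X} (hf : IsRK E α f) (hβ : E β α) (hu : FunApp E f β u) :
    E x u ↔ ∃ γ, E γ β ∧ ∃ v, FunApp E f γ v ∧ SubE E x v :=
  hf.2.2 β u hβ hu x

theorem IsRK.exists_funApp {α f β : X} (hf : IsRK E α f) (hβ : E β α) : ∃ u, FunApp E f β u :=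
  hf.2.1.2.2 β hβ

theorem IsRK.funApp_eq (hext : ExtensionalityAx E) (hpair : PairAx E)
    (hfnd : FoundationScheme E Pi1PC) {α f α' f' : X} (hf : IsRK E α f) (hf' : IsRK E α' f')
    {β u u' : X} (hβ : E β α) (hβ' : E β α') (hu : FunApp E f β u) (hu' : FunApp E f' β u') :
    u = u' := by
  by_contra hne
  obtain ⟨β, ⟨hβ, hβ', u, hu, u', hu', hne⟩, hmin⟩ := hfnd.exists_minimal
    (P := fun p β => E β (p 0) ∧ E β (p 1) ∧
      ∃ u, FunApp E (p 2) β u ∧ ∃ u', FunApp E (p 3) β u' ∧ u ≠ u')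
    ((Definable.mem _ _).and ((Definable.mem _ _).and (Definable.exists_funApp hext hpair _ _
      (Definable.exists_funApp hext hpair _ _ (Definable.eq _ _).not))))
    ![α, α', f, f'] ⟨β, hβ, hβ', u, hu, u', hu', hne⟩
  have hagree : ∀ γ, E γ β → ∀ v v', FunApp E f γ v → FunApp E f' γ v' → v = v' :=
    fun γ hγ v v' hv hv' => by_contra fun h =>
      hmin γ hγ ⟨hf.1.1 β hβ γ hγ, hf'.1.1 β hβ' γ hγ, v, hv, v', hv', h⟩
  refine hne (hext _ _ fun x => ?_)
  rw [hf.mem_iff hβ hu, hf'.mem_iff hβ' hu']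
  constructor
  · rintro ⟨γ, hγ, v, hv, hxv⟩
    obtain ⟨v', hv'⟩ := hf'.exists_funApp (hf'.1.1 β hβ' γ hγ)
    exact ⟨γ, hγ, v', hv', hagree γ hγ v v' hv hv' ▸ hxv⟩
  · rintro ⟨γ, hγ, v', hv', hxv⟩
    obtain ⟨v, hv⟩ := hf.exists_funApp (hf.1.1 β hβ γ hγ)
    exact ⟨γ, hγ, v, hv, (hagree γ hγ v v' hv hv').symm ▸ hxv⟩

end Hierarchies

/-- `u = V_β`, as computed by some initial segment of the cumulative hierarchy. -/
def IsStage (E : X → X → Prop) (β u : X) : Prop :=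
  ∃ α f, IsRK E α f ∧ E β α ∧ FunApp E f β u

section Stages

variable {E : X → X → Prop} {β γ u v x z : X}

theorem rankLe_iff : RankLe E x z ↔ ∀ β u, IsStage E β u → E z u → E x u :=
  ⟨fun h _ _ ⟨α, f, hf, hβ, hu⟩ => h α f _ _ hf hβ hu,
    fun h _ _ _ _ hf hβ hu => h _ _ ⟨_, _, hf, hβ, hu⟩⟩

theorem IsStage.isOrdinal (h : IsStage E β u) : IsOrdinal E β :=
  let ⟨_, _, hf, hβ, _⟩ := h
  hf.1.of_mem hβ

theorem IsStage.eq (hext : ExtensionalityAx E) (hpair : PairAx E)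
    (hfnd : FoundationScheme E Pi1PC) (hu : IsStage E β u) (hv : IsStage E β v) : u = v :=
  let ⟨_, _, hf, hβ, hu⟩ := hu
  let ⟨_, _, hf', hβ', hv⟩ := hv
  hf.funApp_eq hext hpair hfnd hf' hβ hβ' hu hv

theorem IsStage.mem_iff (hext : ExtensionalityAx E) (hpair : PairAx E)
    (hfnd : FoundationScheme E Pi1PC) (hu : IsStage E β u) :
    E x u ↔ ∃ γ, E γ β ∧ ∃ v, IsStage E γ v ∧ SubE E x v := by
  obtain ⟨α, f, hf, hβ, hu⟩ := hu
  rw [hf.mem_iff hβ hu]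
  refine exists_congr fun γ => and_congr_right fun hγ =>
    ⟨fun ⟨v, hv, hxv⟩ => ⟨v, ⟨α, f, hf, hf.1.1 β hβ γ hγ, hv⟩, hxv⟩, fun ⟨v, hv, hxv⟩ => ?_⟩
  obtain ⟨v', hv'⟩ := hf.exists_funApp (hf.1.1 β hβ γ hγ)
  exact ⟨v', hv', (IsStage.eq hext hpair hfnd ⟨α, f, hf, hf.1.1 β hβ γ hγ, hv'⟩ hv) ▸ hxv⟩

theorem IsStage.subE_of_mem (hext : ExtensionalityAx E) (hpair : PairAx E)
    (hfnd : FoundationScheme E Pi1PC) (hu : IsStage E β u) (hv : IsStage E γ v) (hγ : E γ β) :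
    SubE E v u := fun _ hx =>
  let ⟨δ, hδ, w, hw, hxw⟩ := (hv.mem_iff hext hpair hfnd).1 hx
  (hu.mem_iff hext hpair hfnd).2 ⟨δ, hu.isOrdinal.1 γ hγ δ hδ, w, hw, hxw⟩

theorem IsStage.mem_of_mem_of_not_mem (hext : ExtensionalityAx E) (hpair : PairAx E)
    (hfnd : FoundationScheme E Pi1PC) (hv : IsStage E γ v) (hu : IsStage E β u) (hzu : E z u)
    (hzv : ¬ E z v) : E γ β := by
  rcases hv.isOrdinal.comparable hext hfnd hu.isOrdinal with h | rfl | h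
  · exact h
  · exact absurd (hu.eq hext hpair hfnd hv ▸ hzu) hzv
  · exact absurd (hv.subE_of_mem hext hpair hfnd hu h z hzu) hzv

theorem IsStage.rankLe (hext : ExtensionalityAx E) (hpair : PairAx E)
    (hfnd : FoundationScheme E Pi1PC) (hv : IsStage E γ v) (hx : SubE E x v) (hz : ¬ E z v) :
    RankLe E x z :=
  rankLe_iff.2 fun _ _ hu hzu => (hu.mem_iff hext hpair hfnd).2
    ⟨γ, hv.mem_of_mem_of_not_mem hext hpair hfnd hu hzu hz, v, hv, hx⟩

/-- In standard terms: `ρ(x) < ρ(c)` implies `ρ(x) ≤ ρ(z)` for some `z ∈ c`. -/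
theorem IsStage.exists_rankLe (hext : ExtensionalityAx E) (hpair : PairAx E)
    (hfnd : FoundationScheme E Pi1PC) {c : X} (hu : IsStage E β u) (hx : E x u) (hc : ¬ E c u) :
    ∃ z, E z c ∧ RankLe E x z := by
  obtain ⟨γ, hγ, v, hv, hxv⟩ := (hu.mem_iff hext hpair hfnd).1 hx
  obtain ⟨z, hz, hzv⟩ : ∃ z, E z c ∧ ¬ E z v := by
    by_contra! h
    exact hc ((hu.mem_iff hext hpair hfnd).2 ⟨γ, hγ, v, hv, h⟩)
  exact ⟨z, hz, hv.rankLe hext hpair hfnd hxv hzv⟩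

end Stages

def SF.subset {n : ℕ} (i j : Fin n) : SF n := .ballMem i (.mem (Fin.last n) j.castSucc)

theorem SF.eval_subset {E : X → X → Prop} {n : ℕ} (i j : Fin n) (w : Fin n → X) :
    (SF.subset i j).Eval E w ↔ SubE E (w i) (w j) := by
  simp only [SF.subset, SF.Eval, Fin.snoc_last, Fin.snoc_castSucc, SubE]

/-- Relativization of all quantifiers to the new variable `0`. -/
def SF.relativize : {n : ℕ} → SF n → SF (n + 1)
  | _, .mem i j => .mem i.succ j.succ
  | _, .eq i j => .eq i.succ j.succ
  | _, .not φ => .not φ.relativize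
  | _, .and φ ψ => .and φ.relativize ψ.relativize
  | _, .or φ ψ => .or φ.relativize ψ.relativize
  | _, .bexMem i φ => .bexMem i.succ φ.relativize
  | _, .ballMem i φ => .ballMem i.succ φ.relativize
  | n, .bexSub i φ => .bexMem 0 (.and (.subset (Fin.last (n + 1)) i.succ.castSucc) φ.relativize)
  | n, .ballSub i φ =>
    .ballMem 0 (.or (.not (.subset (Fin.last (n + 1)) i.succ.castSucc)) φ.relativize)
  | _, .ex φ => .bexMem 0 φ.relativize
  | _, .all φ => .ballMem 0 φ.relativize

theorem SF.isDelta0_relativize {n : ℕ} (φ : SF n) : φ.relativize.IsDelta0 := by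
  induction φ with
  | mem | eq => trivial
  | not _ ih | bexMem _ _ ih | ballMem _ _ ih | ex _ ih | all _ ih => exact ih
  | and _ _ ih ih' | or _ _ ih ih' => exact ⟨ih, ih'⟩
  | bexSub _ _ ih | ballSub _ _ ih => exact ⟨trivial, ih⟩

section Relativize

variable {E : X → X → Prop} {A : Set X}

theorem EndExtSet.exists_mem_iff (hA : EndExtSet E A) (y : A) {Q : X → Prop} :
    (∃ x, E x y ∧ Q x) ↔ ∃ x : A, E x y ∧ Q x :=
  ⟨fun ⟨x, hx, hQ⟩ => ⟨⟨x, hA x y y.2 hx⟩, hx, hQ⟩, fun ⟨x, hx, hQ⟩ => ⟨x, hx, hQ⟩⟩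

theorem EndExtSet.forall_mem_iff (hA : EndExtSet E A) (y : A) {Q : X → Prop} :
    (∀ x, E x y → Q x) ↔ ∀ x : A, E x y → Q x :=
  ⟨fun h x => h x, fun h x hx => h ⟨x, hA x y y.2 hx⟩ hx⟩

theorem EndExtSet.subE_restrict_iff (hA : EndExtSet E A) (x y : A) :
    SubE (restrict E A) x y ↔ SubE E x y :=
  (hA.forall_mem_iff x (Q := fun z => E z y)).symm

theorem Fin.snoc_cons_comp_val {n : ℕ} (c : X) (w : Fin n → A) (x : A) :
    Fin.snoc (α := fun _ => X) (Fin.cons c (Subtype.val ∘ w)) (x : X) =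
      Fin.cons (α := fun _ => X) c (Subtype.val ∘ Fin.snoc w x) := by
  rw [Fin.comp_snoc, Fin.cons_snoc_eq_snoc_cons]

theorem SF.eval_relativize (hA : EndExtSet E A) {c : X} (hc : ∀ x, E x c ↔ x ∈ A) {n : ℕ}
    (φ : SF n) (w : Fin n → A) :
    φ.relativize.Eval E (Fin.cons c (Subtype.val ∘ w)) ↔ φ.Eval (restrict E A) w := by
  have hexists : ∀ Q : X → Prop, (∃ x, E x c ∧ Q x) ↔ ∃ x : A, Q x := fun Q =>
    ⟨fun ⟨x, hx, hQ⟩ => ⟨⟨x, (hc x).1 hx⟩, hQ⟩, fun ⟨x, hQ⟩ => ⟨x, (hc x).2 x.2, hQ⟩⟩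
  have hforall : ∀ Q : X → Prop, (∀ x, E x c → Q x) ↔ ∀ x : A, Q x := fun Q =>
    ⟨fun h x => h x ((hc x).2 x.2), fun h x hx => h ⟨x, (hc x).1 hx⟩⟩
  induction φ with
  | mem i j | eq i j => simp [SF.relativize, SF.Eval, restrict, Subtype.ext_iff]
  | not _ ih => simp only [SF.relativize, SF.Eval, ih]
  | and _ _ ih ih' | or _ _ ih ih' => simp only [SF.relativize, SF.Eval, ih, ih']
  | bexMem i _ ih =>
    simp only [SF.relativize, SF.Eval, Fin.cons_succ, Function.comp_apply, hA.exists_mem_iff,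
      Fin.snoc_cons_comp_val, ih]; rfl
  | ballMem i _ ih =>
    simp only [SF.relativize, SF.Eval, Fin.cons_succ, Function.comp_apply, hA.forall_mem_iff,
      Fin.snoc_cons_comp_val, ih]; rfl
  | bexSub i _ ih =>
    simp only [SF.relativize, SF.Eval, Fin.cons_zero, hexists, SF.eval_subset, Fin.snoc_last,
      Fin.snoc_castSucc, Fin.cons_succ, Function.comp_apply, ← hA.subE_restrict_iff]
    simp only [Fin.snoc_cons_comp_val, ih]
  | ballSub i _ ih =>
    simp only [SF.relativize, SF.Eval, Fin.cons_zero, hforall, SF.eval_subset, Fin.snoc_last,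
      Fin.snoc_castSucc, Fin.cons_succ, Function.comp_apply, ← hA.subE_restrict_iff]
    simp only [Fin.snoc_cons_comp_val, ih, imp_iff_not_or]
  | ex _ ih =>
    simp only [SF.relativize, SF.Eval, Fin.cons_zero, hexists, Fin.snoc_cons_comp_val, ih]
  | all _ ih =>
    simp only [SF.relativize, SF.Eval, Fin.cons_zero, hforall, Fin.snoc_cons_comp_val, ih]

end Relativize

theorem separationScheme_restrict_of_mem_iff {E : X → X → Prop} {A : Set X}
    (hsep : SeparationScheme E Delta0C) (hA : PowExtSet E A) {c : X} (hc : ∀ x, E x c ↔ x ∈ A) :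
    SeparationScheme (restrict E A) FullC := by
  intro n φ _ p w
  obtain ⟨y, hy⟩ := hsep (n + 1) φ.relativize φ.isDelta0_relativize
    (Fin.cons c (Subtype.val ∘ p)) w
  refine ⟨⟨y, hA.2 y w w.2 fun x hx => ((hy x).1 hx).1⟩, fun x => ?_⟩
  have hyx := hy x
  rwa [Fin.snoc_cons_comp_val, SF.eval_relativize hA.1 hc] at hyx

section BluntExtension

variable {E : X → X → Prop} {A : Set X} {c : X}

theorem BluntSet.exists_top (h : BluntSet E A) : ∃ c, (∀ x, E x c → x ∈ A) ∧ c ∉ A := by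
  by_contra! hc
  exact h.2 ⟨h.1, fun c hcA => hc c hcA⟩

theorem RankExtSet.exists_stage_not_mem (hrk : RankExtSet E A) {y : X} (hy : y ∈ A)
    (hc : c ∉ A) : ∃ β u, IsStage E β u ∧ E y u ∧ ¬ E c u := by
  by_contra! h
  exact hc (hrk.2 c y hy (rankLe_iff.2 h))

theorem CollectionScheme.exists_stage_codes (hcoll : CollectionScheme E Delta0PC)
    (hext : ExtensionalityAx E) (hpair : PairAx E) {w : X}
    (h : ∀ z, E z w → ∃ β u, IsStage E β u ∧ E z u ∧ ¬ E c u) :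
    ∃ B, ∀ z, E z w → ∃ y, E y B ∧ ∃ α, E α y ∧ ∃ f, E f y ∧ IsRK E α f ∧
      ∃ β, E β α ∧ ∃ u, FunApp E f β u ∧ E z u ∧ ¬ E c u := by
  refine hcoll.exists_of_definable (P := fun p z y => ∃ α, E α y ∧ ∃ f, E f y ∧ IsRK E α f ∧
      ∃ β, E β α ∧ ∃ u, FunApp E f β u ∧ E z u ∧ ¬ E (p 0) u)
    (.exists_mem _ (.exists_mem _ ((Definable.isRK hext hpair _ _).and (.exists_mem _
      (.exists_funApp hext hpair _ _ ((Definable.mem _ _).and (Definable.mem _ _).not))))))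
    ![c] w fun z hz => ?_
  obtain ⟨β, u, ⟨α, f, hf, hβ, hu⟩, hzu, hcu⟩ := h z hz
  obtain ⟨y, hy⟩ := hpair α f
  exact ⟨y, α, (hy α).2 (.inl rfl), f, (hy f).2 (.inr rfl), hf, β, hβ, u, hu, hzu, hcu⟩

/-- The subset quantifier in `IsRK` is bounded by the power set of a transitive set containing
`B`. -/
theorem exists_union_stage_codes (hext : ExtensionalityAx E) (hpair : PairAx E)
    (htco : TCoAx E) (hpow : PowerAx E) (hsep : SeparationScheme E Delta0C) (B c : X) :
    ∃ U, ∀ x, E x U ↔ ∃ y, E y B ∧ ∃ α, E α y ∧ ∃ f, E f y ∧ IsRK E α f ∧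
      ∃ β, E β α ∧ ∃ u, FunApp E f β u ∧ E x u ∧ ¬ E c u := by
  obtain ⟨t, ht, hBt⟩ := htco B
  obtain ⟨D, hD⟩ := hpow t
  obtain ⟨U, hU⟩ := hsep.exists_of_definable
    (P := fun p x => ∃ y, E y (p 0) ∧ ∃ α, E α y ∧ ∃ f, E f y ∧ IsRKWithin E (p 1) α f ∧
      ∃ β, E β α ∧ ∃ u, FunApp E f β u ∧ E x u ∧ ¬ E (p 2) u)
    (.exists_mem _ (.exists_mem _ (.exists_mem _ ((Definable.isRKWithin hext hpair _ _ _).and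
      (.exists_mem _ (.exists_funApp hext hpair _ _ ((Definable.mem _ _).and
        (Definable.mem _ _).not)))))))
    ![B, D, c] t
  have hft : ∀ y f, E y B → E f y → E f t := fun y f hy hf => ht y (hBt y hy) f hf
  refine ⟨U, fun x => (hU x).trans ⟨?_, ?_⟩⟩
  · rintro ⟨-, y, hy, α, hα, f, hf, hfα, rest⟩
    exact ⟨y, hy, α, hα, f, hf, (isRK_iff_isRKWithin hpair ht hD (hft y f hy hf)).2 hfα, rest⟩
  · rintro ⟨y, hy, α, hα, f, hf, hfα, β, hβ, u, hu, hxu, hcu⟩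
    exact ⟨ht u (hu.mem_of_transSet hpair ht (hft y f hy hf)) x hxu, y, hy, α, hα, f, hf,
      (isRK_iff_isRKWithin hpair ht hD (hft y f hy hf)).1 hfα, β, hβ, u, hu, hxu, hcu⟩

theorem exists_mem_iff_of_bluntSet (hN : ModelKPP E) (hrk : RankExtSet E A)
    (hblunt : BluntSet E A) : ∃ U, ∀ x, E x U ↔ x ∈ A := by
  obtain ⟨⟨⟨hext, -, hpair, -, -, htco, -, hsep, -⟩, hpow⟩, hcoll, hfnd⟩ := hN
  obtain ⟨c, hcA, hc⟩ := hblunt.exists_top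
  obtain ⟨B, hB⟩ := hcoll.exists_stage_codes hext hpair fun z hz =>
    hrk.exists_stage_not_mem (hcA z hz) hc
  obtain ⟨U, hU⟩ := exists_union_stage_codes hext hpair htco hpow hsep B c
  refine ⟨U, fun x => (hU x).trans ⟨?_, fun hx => ?_⟩⟩
  · rintro ⟨y, -, α, -, f, -, hf, β, hβ, u, hu, hxu, hcu⟩
    obtain ⟨z, hz, hxz⟩ := IsStage.exists_rankLe hext hpair hfnd ⟨α, f, hf, hβ, hu⟩ hxu hcu
    exact hrk.2 x z (hcA z hz) hxz
  · obtain ⟨β, u, hu, hxu, hcu⟩ := hrk.exists_stage_not_mem hx hc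
    obtain ⟨z, hz, hxz⟩ := hu.exists_rankLe hext hpair hfnd hxu hcu
    obtain ⟨y, hy, α, hα, f, hf', hf, β', hβ', u', hu', hzu', hcu'⟩ := hB z hz
    exact ⟨y, hy, α, hα, f, hf', hf, β', hβ', u', hu', hxz α f β' u' hf hβ' hu' hzu', hcu'⟩

end BluntExtension

theorem full_separation_of_blunt_rank_ext_general (X : Type u) (E : X → X → Prop)
    (A : Set X) (hN : ModelKPP E)
    (hrk : RankExtSet E A) (hblunt : BluntSet E A) :
    SeparationScheme (restrict E A) FullC := by
  obtain ⟨c, hc⟩ := exists_mem_iff_of_bluntSet hN hrk hblunt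
  exact separationScheme_restrict_of_mem_iff hN.1.1.2.2.2.2.2.2.2.1 hrk.1 hc

/-- if `M` and `N` are models of `KP^𝒫` and `N` is a blunt rank
extension of `M`, then `M` satisfies full Separation. -/
theorem full_separation_of_blunt_rank_ext (X : Type u) (E : X → X → Prop)
    (A : Set X) (hN : ModelKPP E) (hMmod : ModelKPP (restrict E A))
    (hrk : RankExtSet E A) (hblunt : BluntSet E A) :
    SeparationScheme (restrict E A) FullC :=
  full_separation_of_blunt_rank_ext_general X E A hN hrk hblunt
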